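/- arXiv:2406.09083 — 5 statements merged into one kernel-verified Lean document; each statement's English description precedes it below -/
import Mathlib

section
/- Let f_1 = 1, f_2 = 1, and f_{i+2} = f_i + f_{i+1} denote the Fibonacci numbers, and let n be a positive integer (the finger count). The Octopus position [1 | 1]_n is an N-position if there exists a positive integer i such that f_{2i} ≤ n < f_{2i+1}, and otherwise it is a P-position. -/
namespace Octopus

/-- An Octopus position: the multiset of Left's hand values and the
multiset of Right's hand values. -/
abbrev Pos : Type := Multiset ℕ × Multiset ℕ

/-- All hand values lie in `{1, ..., n}`, where `n` is the finger count. -/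
def Valid (n : ℕ) (P : Pos) : Prop :=
  (∀ x ∈ P.1, 1 ≤ x ∧ x ≤ n) ∧ (∀ y ∈ P.2, 1 ≤ y ∧ y ≤ n)

/-- A move of Left with finger count `n`: Left chooses an attacking hand `x` in
her multiset and a target hand `y` in Right's multiset; that copy of `y` is
replaced by `x + y`, or removed from play if `x + y > n`. -/
def LeftMove (n : ℕ) (P Q : Pos) : Prop :=
  ∃ x ∈ P.1, ∃ y ∈ P.2,
    Q.1 = P.1 ∧
    Q.2 = if x + y ≤ n then (x + y) ::ₘ P.2.erase y else P.2.erase y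

/-- A move of Right with finger count `n`: Right chooses an attacking hand `y` in
his multiset and a target hand `x` in Left's multiset; that copy of `x` is
replaced by `x + y`, or removed from play if `x + y > n`. -/
def RightMove (n : ℕ) (P Q : Pos) : Prop :=
  ∃ x ∈ P.1, ∃ y ∈ P.2,
    Q.2 = P.2 ∧
    Q.1 = if x + y ≤ n then (x + y) ::ₘ P.1.erase x else P.1.erase x

/-- `LeftWinsFirst n P`: Left, moving first from `P`, has a winning strategy
(normal play: a player with no move on their turn loses). -/
inductive LeftWinsFirst (n : ℕ) : Pos → Prop
  | intro (P Q : Pos) (hmove : LeftMove n P Q)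
      (hwin : ∀ R, RightMove n Q R → LeftWinsFirst n R) : LeftWinsFirst n P

/-- `RightWinsFirst n P`: Right, moving first from `P`, has a winning strategy. -/
inductive RightWinsFirst (n : ℕ) : Pos → Prop
  | intro (P Q : Pos) (hmove : RightMove n P Q)
      (hwin : ∀ R, LeftMove n Q R → RightWinsFirst n R) : RightWinsFirst n P

/-- Left, moving second from `P`, has a winning strategy. -/
def LeftWinsSecond (n : ℕ) (P : Pos) : Prop :=
  ∀ Q, RightMove n P Q → LeftWinsFirst n Q

/-- Right, moving second from `P`, has a winning strategy. -/
def RightWinsSecond (n : ℕ) (P : Pos) : Prop :=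
  ∀ Q, LeftMove n P Q → RightWinsFirst n Q

/-- `N`-position: whichever player moves first wins. -/
def NPos (n : ℕ) (P : Pos) : Prop := LeftWinsFirst n P ∧ RightWinsFirst n P

/-- `P`-position: whichever player moves second wins. -/
def PPos (n : ℕ) (P : Pos) : Prop := LeftWinsSecond n P ∧ RightWinsSecond n P

/-- `L`-position: Left wins whoever moves first. -/
def LPos (n : ℕ) (P : Pos) : Prop := LeftWinsFirst n P ∧ LeftWinsSecond n P

/-- `R`-position: Right wins whoever moves first. -/
def RPos (n : ℕ) (P : Pos) : Prop := RightWinsFirst n P ∧ RightWinsSecond n P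

/-- The position `[1^a, 2^b | 1^c, 2^d]` (used with finger count 2). -/
def two (a b c d : ℕ) : Pos :=
  (Multiset.replicate a 1 + Multiset.replicate b 2,
   Multiset.replicate c 1 + Multiset.replicate d 2)

-- auxiliary lemmas
def swapP (P : Pos) : Pos := (P.2, P.1)

lemma leftMove_swap {n : ℕ} {P Q : Pos} (h : LeftMove n P Q) :
    RightMove n (swapP P) (swapP Q) := by
  obtain ⟨x, hx, y, hy, h1, h2⟩ := h
  exact ⟨y, hy, x, hx, h1, by simp only [swapP]; rw [h2, Nat.add_comm]⟩

lemma rightMove_swap {n : ℕ} {P Q : Pos} (h : RightMove n P Q) :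
    LeftMove n (swapP P) (swapP Q) := by
  obtain ⟨x, hx, y, hy, h1, h2⟩ := h
  exact ⟨y, hy, x, hx, h1, by simp only [swapP]; rw [h2, Nat.add_comm]⟩

lemma lwf_swap {n : ℕ} {P : Pos} (h : LeftWinsFirst n P) :
    RightWinsFirst n (swapP P) := by
  induction h with
  | intro P Q hmove hwin ih =>
    exact ⟨swapP P, swapP Q, leftMove_swap hmove,
      fun R hR => ih (swapP R) (leftMove_swap hR)⟩

lemma leftMove_singleton {n a b : ℕ} {Q : Pos}
    (h : LeftMove n (({a} : Multiset ℕ), ({b} : Multiset ℕ)) Q) :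
    Q = ({a}, if a + b ≤ n then {a + b} else 0) := by
  obtain ⟨x, hx, y, hy, h1, h2⟩ := h
  simp only [Multiset.mem_singleton] at hx hy
  subst hx; subst hy
  obtain ⟨Q1, Q2⟩ := Q
  simp only [Multiset.erase_singleton] at h1 h2
  simp_all

lemma rightMove_singleton {n a b : ℕ} {Q : Pos}
    (h : RightMove n (({a} : Multiset ℕ), ({b} : Multiset ℕ)) Q) :
    Q = ((if a + b ≤ n then {a + b} else 0), {b}) := by
  obtain ⟨x, hx, y, hy, h1, h2⟩ := h
  simp only [Multiset.mem_singleton] at hx hy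
  subst hx; subst hy
  obtain ⟨Q1, Q2⟩ := Q
  simp only [Multiset.erase_singleton] at h1 h2
  simp_all

lemma leftMove_mk (n a b : ℕ) :
    LeftMove n (({a} : Multiset ℕ), ({b} : Multiset ℕ))
      ({a}, if a + b ≤ n then {a + b} else 0) :=
  ⟨a, by simp, b, by simp, rfl, by simp [Multiset.erase_singleton]⟩


lemma claim (n : ℕ) : ∀ t m : ℕ, n < Nat.fib (m + 2 + 2 * t) →
    (∀ s, s < 2 * t → Nat.fib (m + 2 + s) ≤ n) →
    LeftWinsFirst n (({Nat.fib (m + 1)} : Multiset ℕ), ({Nat.fib m} : Multiset ℕ)) := by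
  intro t
  induction t with
  | zero =>
    intro m hlt _
    simp only [Nat.mul_zero, Nat.add_zero] at hlt
    have hsum : Nat.fib (m + 1) + Nat.fib m = Nat.fib (m + 2) := by
      rw [Nat.fib_add_two]; omega
    have hmove := leftMove_mk n (Nat.fib (m + 1)) (Nat.fib m)
    rw [if_neg (by omega)] at hmove
    refine ⟨_, _, hmove, fun R hR => ?_⟩
    obtain ⟨x, hx, y, hy, -⟩ := hR
    exact absurd hy (Multiset.notMem_zero _)
  | succ t ih =>
    intro m hlt hall
    have h2 : Nat.fib (m + 2) ≤ n := by
      have := hall 0 (by omega); simpa using this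
    have h3 : Nat.fib (m + 3) ≤ n := hall 1 (by omega)
    have hsum : Nat.fib (m + 1) + Nat.fib m = Nat.fib (m + 2) := by
      rw [Nat.fib_add_two]; omega
    have e1 : Nat.fib (m + 3) = Nat.fib (m + 1) + Nat.fib (m + 2) :=
      Nat.fib_add_two (n := m + 1)
    have hsum2 : Nat.fib (m + 1) + Nat.fib (m + 2) = Nat.fib (m + 3) := by omega
    have hmove := leftMove_mk n (Nat.fib (m + 1)) (Nat.fib m)
    rw [if_pos (by omega), hsum] at hmove
    refine ⟨_, _, hmove, fun R hR => ?_⟩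
    have hchar := rightMove_singleton hR
    rw [if_pos (by omega), hsum2] at hchar
    subst hchar
    have := ih (m + 2)
      (by rw [show m + 2 + 2 + 2 * t = m + 2 + 2 * (t + 1) from by ring]; exact hlt)
      (fun s hs => by
        have := hall (s + 2) (by omega)
        rw [show m + 2 + 2 + s = m + 2 + (s + 2) from by ring]; exact this)
    exact this


lemma fib1 : Nat.fib 1 = 1 := by decide
lemma fib2 : Nat.fib 2 = 1 := by decide
lemma fib3 : Nat.fib 3 = 2 := by decide

/-- `[1 | 1]_n` is an N-position iff `fib (2i) ≤ n < fib (2i+1)`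
for some positive `i`, and otherwise a P-position. -/
theorem one_hand_outcome (n : ℕ) (hn : 0 < n) :
    ((∃ i : ℕ, 0 < i ∧ Nat.fib (2 * i) ≤ n ∧ n < Nat.fib (2 * i + 1)) →
      NPos n ({1}, {1})) ∧
    ((¬ ∃ i : ℕ, 0 < i ∧ Nat.fib (2 * i) ≤ n ∧ n < Nat.fib (2 * i + 1)) →
      PPos n ({1}, {1})) := by
  constructor
  · rintro ⟨i, hi, h1, h2⟩
    have hlt : n < Nat.fib (1 + 2 + 2 * (i - 1)) := by
      rw [show 1 + 2 + 2 * (i - 1) = 2 * i + 1 from by omega]; exact h2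
    have hall : ∀ s, s < 2 * (i - 1) → Nat.fib (1 + 2 + s) ≤ n :=
      fun s hs => le_trans (Nat.fib_mono (by omega : 1 + 2 + s ≤ 2 * i)) h1
    have hL := claim n (i - 1) 1 hlt hall
    rw [show (1 : ℕ) + 1 = 2 from rfl, fib2, fib1] at hL
    exact ⟨hL, lwf_swap hL⟩
  · intro hne
    have hex : ∃ k, n < Nat.fib (k + 3) :=
      ⟨n + 2, by have := Nat.le_fib_self (n := n + 2 + 3) (by omega); omega⟩
    set k := Nat.find hex with hkdef
    have hk : n < Nat.fib (k + 3) := Nat.find_spec hex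
    have hk2 : Nat.fib (k + 2) ≤ n := by
      rcases k with - | k'
      · rw [fib2]; exact hn
      · have := Nat.find_min hex (m := k') (by omega)
        rw [show k' + 1 + 2 = k' + 3 from by omega]
        omega
    obtain ⟨i, hi, hP1, hP2⟩ :
        ∃ i : ℕ, 0 < i ∧ Nat.fib (2 * i + 1) ≤ n ∧ n < Nat.fib (2 * i + 2) := by
      rcases Nat.even_or_odd (k + 3) with he | ho
      · obtain ⟨j, hj⟩ := he
        refine ⟨j - 1, by omega, ?_, ?_⟩
        · rw [show 2 * (j - 1) + 1 = k + 2 from by omega]; exact hk2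
        · rw [show 2 * (j - 1) + 2 = k + 3 from by omega]; exact hk
      · obtain ⟨j, hj⟩ := ho
        exact absurd ⟨j, by omega,
          by rw [show 2 * j = k + 2 from by omega]; exact hk2,
          by rw [show 2 * j + 1 = k + 3 from by omega]; exact hk⟩ hne
    have h2n : 2 ≤ n := by
      have h33 : Nat.fib 3 ≤ Nat.fib (2 * i + 1) := Nat.fib_mono (by omega)
      rw [fib3] at h33; omega
    have hLS : LeftWinsSecond n ({1}, {1}) := by
      intro Q hQ
      have hchar := rightMove_singleton hQ
      rw [if_pos (by omega)] at hchar
      subst hchar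
      have hlt : n < Nat.fib (2 + 2 + 2 * (i - 1)) := by
        rw [show 2 + 2 + 2 * (i - 1) = 2 * i + 2 from by omega]; exact hP2
      have hall : ∀ s, s < 2 * (i - 1) → Nat.fib (2 + 2 + s) ≤ n :=
        fun s hs => le_trans (Nat.fib_mono (by omega : 2 + 2 + s ≤ 2 * i + 1)) hP1
      have hL := claim n (i - 1) 2 hlt hall
      rw [show (2 : ℕ) + 1 = 3 from rfl, fib3, fib2] at hL
      exact hL
    refine ⟨hLS, fun Q hQ => ?_⟩
    have h1 := leftMove_swap hQ
    exact lwf_swap (hLS (swapP Q) h1)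



end Octopus
end

section
/- Let P = [x_1,...,x_l | y_1,...,y_r]_n be an Octopus position with l < r. If Left, moving first, has a winning strategy from P, then l = r - 1. -/
namespace Octopus

/-! ### Auxiliary machinery -/

/-- The potential of a multiset of hands: total remaining "hit points". -/
def mu (n : ℕ) (s : Multiset ℕ) : ℕ := (s.map (fun v => n + 1 - v)).sum

lemma mu_cons (n c : ℕ) (t : Multiset ℕ) : mu n (c ::ₘ t) = (n + 1 - c) + mu n t := by
  simp [mu]

lemma mu_eq (n : ℕ) {a : ℕ} {s : Multiset ℕ} (h : a ∈ s) :
    mu n s = (n + 1 - a) + mu n (s.erase a) := by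
  conv_lhs => rw [← Multiset.cons_erase h]
  rw [mu_cons]

lemma mu_erase_le (n : ℕ) {a : ℕ} {s : Multiset ℕ} (h : a ∈ s) :
    mu n (s.erase a) ≤ mu n s := by
  rw [mu_eq n h]; omega

lemma mu_erase_lt (n : ℕ) {a : ℕ} {s : Multiset ℕ} (h : a ∈ s) (han : a ≤ n) :
    mu n (s.erase a) < mu n s := by
  rw [mu_eq n h]; omega

lemma mu_grow_le (n : ℕ) {a c : ℕ} {s : Multiset ℕ} (h : a ∈ s) (hac : a ≤ c) :
    mu n (c ::ₘ s.erase a) ≤ mu n s := by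
  rw [mu_cons, mu_eq n h]; omega

lemma mu_grow_lt (n : ℕ) {a c : ℕ} {s : Multiset ℕ} (h : a ∈ s) (hac : a < c) (hcn : c ≤ n) :
    mu n (c ::ₘ s.erase a) < mu n s := by
  rw [mu_cons, mu_eq n h]; omega

lemma mu_pos (n : ℕ) {a : ℕ} {s : Multiset ℕ} (h : a ∈ s) (han : a ≤ n) :
    0 < mu n s := by
  rw [mu_eq n h]; omega

lemma card_cons_erase {a : ℕ} (c : ℕ) {s : Multiset ℕ} (h : a ∈ s) :
    Multiset.card (c ::ₘ s.erase a) = Multiset.card s := by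
  have h0 : 0 < Multiset.card s := Multiset.card_pos.2 (by rintro rfl; simp at h)
  rw [Multiset.card_cons, Multiset.card_erase_of_mem h, Nat.pred_eq_sub_one]
  omega

lemma exists_max (s : Multiset ℕ) (h : s ≠ 0) : ∃ a ∈ s, ∀ b ∈ s, b ≤ a := by
  induction s using Multiset.induction_on with
  | empty => exact absurd rfl h
  | cons a t IH =>
    by_cases ht : t = 0
    · subst ht
      refine ⟨a, Multiset.mem_cons_self _ _, ?_⟩
      intro b hb
      rcases Multiset.mem_cons.1 hb with hb | hb
      · omega
      · simp at hb
    · obtain ⟨m, hm, hmax⟩ := IH ht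
      by_cases h2 : a ≤ m
      · refine ⟨m, Multiset.mem_cons_of_mem hm, ?_⟩
        intro b hb
        rcases Multiset.mem_cons.1 hb with hb | hb
        · omega
        · exact hmax b hb
      · refine ⟨a, Multiset.mem_cons_self _ _, ?_⟩
        intro b hb
        rcases Multiset.mem_cons.1 hb with hb | hb
        · omega
        · have := hmax b hb; omega

/-- The key strategic lemma: if it is Right's turn and Left has strictly fewer
(but at least one) hands than Right, then Right wins. -/
lemma rightWins_of_lt (n : ℕ) : ∀ k (X Y : Multiset ℕ),
    (∀ x ∈ X, 1 ≤ x ∧ x ≤ n) → (∀ y ∈ Y, 1 ≤ y ∧ y ≤ n) →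
    mu n X + mu n Y ≤ k → X ≠ 0 → Multiset.card X < Multiset.card Y →
    RightWinsFirst n (X, Y) := by
  intro k
  induction k with
  | zero =>
    intro X Y hX hY hmu hX0 hcard
    obtain ⟨x, hx⟩ := Multiset.exists_mem_of_ne_zero hX0
    have := mu_pos n hx (hX x hx).2
    omega
  | succ k IH =>
    intro X Y hX hY hmu hX0 hcard
    have hY0 : Y ≠ 0 := by rintro rfl; simp at hcard
    have hXc : 0 < Multiset.card X := Multiset.card_pos.2 hX0
    by_cases hrem : ∃ x ∈ X, ∃ y ∈ Y, n < x + y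
    · -- Case 1: a removal is available; Right removes a Left hand.
      obtain ⟨x, hx, y, hy, hxy⟩ := hrem
      refine RightWinsFirst.intro _ (X.erase x, Y)
        ⟨x, hx, y, hy, rfl, by rw [if_neg (by omega)]⟩ ?_
      rintro ⟨R1, R2⟩ ⟨x', hx', y', hy', hR1, hR2⟩
      replace hx' : x' ∈ X.erase x := hx'
      replace hy' : y' ∈ Y := hy'
      replace hR2 : R2 = if x' + y' ≤ n then (x' + y') ::ₘ Y.erase y' else Y.erase y' := hR2
      have hR1' : R1 = X.erase x := hR1
      subst hR1'
      have hx'X : x' ∈ X := Multiset.mem_of_mem_erase hx'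
      have hXe : X.erase x ≠ 0 := by rintro h; rw [h] at hx'; simp at hx'
      have hmuX : mu n (X.erase x) < mu n X := mu_erase_lt n hx (hX x hx).2
      have hcX : Multiset.card (X.erase x) = Multiset.card X - 1 :=
        Multiset.card_erase_of_mem hx
      have hYc : 0 < Multiset.card Y := Multiset.card_pos.2 hY0
      by_cases hg : x' + y' ≤ n
      · rw [if_pos hg] at hR2
        have hR2' : R2 = (x' + y') ::ₘ Y.erase y' := hR2
        subst hR2'
        refine IH (X.erase x) _ ?_ ?_ ?_ hXe ?_
        · intro v hv; exact hX v (Multiset.mem_of_mem_erase hv)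
        · intro v hv
          rcases Multiset.mem_cons.1 hv with hv | hv
          · subst hv; have := (hX x' hx'X).1; omega
          · exact hY v (Multiset.mem_of_mem_erase hv)
        · have h1 : mu n ((x' + y') ::ₘ Y.erase y') ≤ mu n Y :=
            mu_grow_le n hy' (by omega)
          omega
        · rw [card_cons_erase _ hy']; omega
      · rw [if_neg hg] at hR2
        have hR2' : R2 = Y.erase y' := hR2
        subst hR2'
        refine IH (X.erase x) _ ?_ ?_ ?_ hXe ?_
        · intro v hv; exact hX v (Multiset.mem_of_mem_erase hv)
        · intro v hv; exact hY v (Multiset.mem_of_mem_erase hv)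
        · have h1 : mu n (Y.erase y') ≤ mu n Y := mu_erase_le n hy'
          omega
        · rw [Multiset.card_erase_of_mem hy', Nat.pred_eq_sub_one]; omega
    · push_neg at hrem
      by_cases hsafe : ∃ x ∈ X, ∃ y ∈ Y, ∀ y2 ∈ Y, x + y + y2 ≤ n
      · -- Case 2a: Right can grow a Left hand without enabling any removal.
        obtain ⟨x, hx, y, hy, hs⟩ := hsafe
        have hy1 : 1 ≤ y := (hY y hy).1
        have hxyn : x + y ≤ n := hrem x hx y hy
        refine RightWinsFirst.intro _ ((x + y) ::ₘ X.erase x, Y)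
          ⟨x, hx, y, hy, rfl, by rw [if_pos hxyn]⟩ ?_
        rintro ⟨R1, R2⟩ ⟨x', hx', y', hy', hR1, hR2⟩
        replace hx' : x' ∈ (x + y) ::ₘ X.erase x := hx'
        replace hy' : y' ∈ Y := hy'
        replace hR2 : R2 = if x' + y' ≤ n then (x' + y') ::ₘ Y.erase y' else Y.erase y' := hR2
        have hR1' : R1 = (x + y) ::ₘ X.erase x := hR1
        subst hR1'
        -- Left cannot remove: every pair still sums to at most n.
        have hg : x' + y' ≤ n := by
          rcases Multiset.mem_cons.1 hx' with h | h
          · subst h; exact hs y' hy'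
          · exact hrem x' (Multiset.mem_of_mem_erase h) y' hy'
        rw [if_pos hg] at hR2
        have hR2' : R2 = (x' + y') ::ₘ Y.erase y' := hR2
        subst hR2'
        refine IH _ _ ?_ ?_ ?_ ?_ ?_
        · intro v hv
          rcases Multiset.mem_cons.1 hv with hv | hv
          · subst hv; have := (hX x hx).1; omega
          · exact hX v (Multiset.mem_of_mem_erase hv)
        · intro v hv
          rcases Multiset.mem_cons.1 hv with hv | hv
          · subst hv
            have hy'1 : 1 ≤ y' := (hY y' hy').1
            constructor <;> omega
          · exact hY v (Multiset.mem_of_mem_erase hv)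
        · have h1 : mu n ((x + y) ::ₘ X.erase x) < mu n X :=
            mu_grow_lt n hx (by omega) hxyn
          have h2 : mu n ((x' + y') ::ₘ Y.erase y') ≤ mu n Y :=
            mu_grow_le n hy' (by omega)
          omega
        · intro h
          have : (x + y) ∈ (0 : Multiset ℕ) := h ▸ Multiset.mem_cons_self _ _
          simp at this
        · rw [card_cons_erase _ hx, card_cons_erase _ hy']; exact hcard
      · -- Case 2b: every grow enables a removal; Right grows max by max.
        push_neg at hsafe
        obtain ⟨xm, hxm, hxmax⟩ := exists_max X hX0
        obtain ⟨ym, hym, hymax⟩ := exists_max Y hY0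
        have hgn : xm + ym ≤ n := hrem xm hxm ym hym
        have key : ∀ y' ∈ Y, n < xm + ym + y' := by
          intro y' hy'
          obtain ⟨y2, hy2, h2⟩ := hsafe xm hxm y' hy'
          have := hymax y2 hy2
          omega
        -- Common continuation after Left's reply, for any resulting `Y₁`.
        have main : ∀ Y₁ : Multiset ℕ,
            (∀ yy ∈ Y₁, 1 ≤ yy ∧ yy ≤ n) →
            (∀ yy ∈ Y₁, n < (xm + ym) + yy) →
            mu n Y₁ ≤ mu n Y →
            Multiset.card X ≤ Multiset.card Y₁ →
            ((∀ yy ∈ Y₁, yy ∈ Y) ∨ Multiset.card X < Multiset.card Y₁) →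
            RightWinsFirst n ((xm + ym) ::ₘ X.erase xm, Y₁) := by
          intro Y₁ hY₁v hP1 hmu₁ hcard₁ hdisj
          have hY₁0 : Y₁ ≠ 0 := by
            rintro rfl
            have h0 : Multiset.card X ≤ 0 := by simpa using hcard₁
            omega
          obtain ⟨yy, hyy⟩ := Multiset.exists_mem_of_ne_zero hY₁0
          -- Right removes the big hand `xm + ym`.
          refine RightWinsFirst.intro _ (X.erase xm, Y₁)
            ⟨xm + ym, Multiset.mem_cons_self _ _, yy, hyy, rfl, ?_⟩ ?_
          · rw [if_neg (by have := hP1 yy hyy; omega)]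
            exact (Multiset.erase_cons_head _ _).symm
          rintro ⟨T1, T2⟩ ⟨x'', hx'', y'', hy'', hT1, hT2⟩
          replace hx'' : x'' ∈ X.erase xm := hx''
          replace hy'' : y'' ∈ Y₁ := hy''
          replace hT2 : T2 = if x'' + y'' ≤ n then (x'' + y'') ::ₘ Y₁.erase y'' else Y₁.erase y'' := hT2
          have hT1' : T1 = X.erase xm := hT1
          subst hT1'
          have hx''X : x'' ∈ X := Multiset.mem_of_mem_erase hx''
          have hXe : X.erase xm ≠ 0 := by rintro h; rw [h] at hx''; simp at hx''
          have hmuX : mu n (X.erase xm) < mu n X := mu_erase_lt n hxm (hX xm hxm).2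
          have hcX : Multiset.card (X.erase xm) = Multiset.card X - 1 :=
            Multiset.card_erase_of_mem hxm
          have hY₁c : 0 < Multiset.card Y₁ := Multiset.card_pos.2 hY₁0
          by_cases hg2 : x'' + y'' ≤ n
          · rw [if_pos hg2] at hT2
            have hT2' : T2 = (x'' + y'') ::ₘ Y₁.erase y'' := hT2
            subst hT2'
            refine IH (X.erase xm) _ ?_ ?_ ?_ hXe ?_
            · intro v hv; exact hX v (Multiset.mem_of_mem_erase hv)
            · intro v hv
              rcases Multiset.mem_cons.1 hv with hv | hv
              · subst hv; have := (hX x'' hx''X).1; omega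
              · exact hY₁v v (Multiset.mem_of_mem_erase hv)
            · have h1 : mu n ((x'' + y'') ::ₘ Y₁.erase y'') ≤ mu n Y₁ :=
                mu_grow_le n hy'' (by omega)
              omega
            · rw [card_cons_erase _ hy'']; omega
          · rw [if_neg hg2] at hT2
            have hT2' : T2 = Y₁.erase y'' := hT2
            subst hT2'
            rcases hdisj with hsub | hlt
            · exact absurd (hrem x'' hx''X y'' (hsub y'' hy'')) hg2
            · refine IH (X.erase xm) _ ?_ ?_ ?_ hXe ?_
              · intro v hv; exact hX v (Multiset.mem_of_mem_erase hv)
              · intro v hv; exact hY₁v v (Multiset.mem_of_mem_erase hv)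
              · have h1 : mu n (Y₁.erase y'') ≤ mu n Y₁ := mu_erase_le n hy''
                omega
              · rw [Multiset.card_erase_of_mem hy'', Nat.pred_eq_sub_one]; omega
        -- Right's move: grow `xm` by `ym`.
        refine RightWinsFirst.intro _ ((xm + ym) ::ₘ X.erase xm, Y)
          ⟨xm, hxm, ym, hym, rfl, by rw [if_pos hgn]⟩ ?_
        rintro ⟨R1, R2⟩ ⟨x', hx', y', hy', hR1, hR2⟩
        replace hx' : x' ∈ (xm + ym) ::ₘ X.erase xm := hx'
        replace hy' : y' ∈ Y := hy'
        replace hR2 : R2 = if x' + y' ≤ n then (x' + y') ::ₘ Y.erase y' else Y.erase y' := hR2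
        have hR1' : R1 = (xm + ym) ::ₘ X.erase xm := hR1
        subst hR1'
        have hYc : 0 < Multiset.card Y := Multiset.card_pos.2 hY0
        by_cases hg : x' + y' ≤ n
        · rw [if_pos hg] at hR2
          have hR2' : R2 = (x' + y') ::ₘ Y.erase y' := hR2
          subst hR2'
          refine main _ ?_ ?_ ?_ ?_ (Or.inr ?_)
          · intro v hv
            rcases Multiset.mem_cons.1 hv with hv | hv
            · subst hv
              have hx'1 : 1 ≤ x' := by
                rcases Multiset.mem_cons.1 hx' with h | h
                · subst h; have := (hX xm hxm).1; omega
                · exact (hX x' (Multiset.mem_of_mem_erase h)).1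
              constructor <;> omega
            · exact hY v (Multiset.mem_of_mem_erase hv)
          · intro v hv
            rcases Multiset.mem_cons.1 hv with hv | hv
            · subst hv
              have := key y' hy'
              have hx'1 : 1 ≤ x' := by
                rcases Multiset.mem_cons.1 hx' with h | h
                · subst h; have := (hX xm hxm).1; omega
                · exact (hX x' (Multiset.mem_of_mem_erase h)).1
              omega
            · exact key v (Multiset.mem_of_mem_erase hv)
          · exact mu_grow_le n hy' (by omega)
          · rw [card_cons_erase _ hy']; omega
          · rw [card_cons_erase _ hy']; exact hcard
        · rw [if_neg hg] at hR2
          have hR2' : R2 = Y.erase y' := hR2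
          subst hR2'
          refine main _ ?_ ?_ ?_ ?_ (Or.inl ?_)
          · intro v hv; exact hY v (Multiset.mem_of_mem_erase hv)
          · intro v hv; exact key v (Multiset.mem_of_mem_erase hv)
          · exact mu_erase_le n hy'
          · rw [Multiset.card_erase_of_mem hy', Nat.pred_eq_sub_one]; omega
          · intro v hv; exact Multiset.mem_of_mem_erase hv

/-- Left cannot win moving first from a position where Right wins moving second. -/
lemma notBoth (n : ℕ) (P : Pos) (h : LeftWinsFirst n P) :
    (∀ Q, LeftMove n P Q → RightWinsFirst n Q) → False := by
  induction h with
  | intro P Q hmove hwin IH =>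
    intro h2
    obtain ⟨_, R, hrm, hrwin⟩ := h2 Q hmove
    exact IH R hrm hrwin

/-- if Left has fewer hands than Right but wins moving first,
then Left has exactly one hand fewer than Right. -/
theorem lessHands_card (n : ℕ) (hn : 0 < n) (P : Pos) (hP : Valid n P)
    (hlr : Multiset.card P.1 < Multiset.card P.2)
    (hwin : LeftWinsFirst n P) :
    Multiset.card P.1 + 1 = Multiset.card P.2 := by
  by_contra hne
  have h2 : Multiset.card P.1 + 2 ≤ Multiset.card P.2 := by omega
  obtain ⟨_, Q, hmove, hnext⟩ := hwin
  obtain ⟨Q1, Q2⟩ := Q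
  obtain ⟨x, hx, y, hy, hQ1, hQ2⟩ := hmove
  have hQ1' : Q1 = P.1 := hQ1
  subst hQ1'
  have hQ2' : Q2 = if x + y ≤ n then (x + y) ::ₘ P.2.erase y else P.2.erase y := hQ2
  clear hQ2
  have hYc : 0 < Multiset.card P.2 :=
    Multiset.card_pos.2 (by rintro h; rw [h] at hy; simp at hy)
  have hccard : Multiset.card P.1 < Multiset.card Q2 := by
    by_cases h : x + y ≤ n
    · rw [if_pos h] at hQ2'
      rw [hQ2', card_cons_erase _ hy]
      omega
    · rw [if_neg h] at hQ2'
      rw [hQ2', Multiset.card_erase_of_mem hy, Nat.pred_eq_sub_one]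
      omega
  have hvQ2 : ∀ v ∈ Q2, 1 ≤ v ∧ v ≤ n := by
    by_cases h : x + y ≤ n
    · rw [if_pos h] at hQ2'
      subst hQ2'
      intro v hv
      rcases Multiset.mem_cons.1 hv with hv | hv
      · subst hv
        have := (hP.1 x hx).1
        constructor <;> omega
      · exact hP.2 v (Multiset.mem_of_mem_erase hv)
    · rw [if_neg h] at hQ2'
      subst hQ2'
      intro v hv
      exact hP.2 v (Multiset.mem_of_mem_erase hv)
  have hQ1ne : P.1 ≠ 0 := by rintro h; rw [h] at hx; simp at hx
  have hRB := rightWins_of_lt n (mu n P.1 + mu n Q2) P.1 Q2 hP.1 hvQ2 le_rfl hQ1ne hccard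
  obtain ⟨_, R, hrm, hrwin⟩ := hRB
  exact notBoth n R (hnext R hrm) hrwin

end Octopus
end

section
/- Let P = [x_1,...,x_l | y_1,...,y_r]_n be an Octopus position with l < r, and suppose Left, moving first, has a winning strategy from P. Then every winning first move for Left removes a hand from Right's list; that is, if a Left option P' of P is such that Left wins from P' with Right to move, then P' was obtained by a move x_i → y_j with x_i + y_j > n, so that Right has r - 1 hands in P'. -/
namespace Octopus

/-! ### Auxiliary material for STATEMENT 3 -/

/-- A termination measure: total "remaining capacity" of all hands. -/
def phi (n : ℕ) (P : Pos) : ℕ :=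
  (P.1.map (fun a => n + 1 - a)).sum + (P.2.map (fun a => n + 1 - a)).sum

lemma sum_erase_lt {n : ℕ} {M : Multiset ℕ} {x : ℕ} (hx : x ∈ M) (hxn : x ≤ n) :
    ((M.erase x).map (fun a => n + 1 - a)).sum < (M.map (fun a => n + 1 - a)).sum := by
  conv_rhs => rw [← Multiset.cons_erase hx]
  rw [Multiset.map_cons, Multiset.sum_cons]
  omega

lemma sum_cons_erase_lt {n : ℕ} {M : Multiset ℕ} {x s : ℕ} (hx : x ∈ M) (hxn : x ≤ n)
    (hs : x < s) :
    ((s ::ₘ M.erase x).map (fun a => n + 1 - a)).sum < (M.map (fun a => n + 1 - a)).sum := by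
  conv_rhs => rw [← Multiset.cons_erase hx]
  rw [Multiset.map_cons, Multiset.sum_cons, Multiset.map_cons, Multiset.sum_cons]
  have h1 : n + 1 - s < n + 1 - x := by omega
  omega

lemma valid_rightMove {n : ℕ} {P Q : Pos} (hP : Valid n P) (h : RightMove n P Q) :
    Valid n Q := by
  obtain ⟨x, hx, y, hy, hQ2, hQ1⟩ := h
  have hx1 := hP.1 x hx
  have hy1 := hP.2 y hy
  constructor
  · intro a ha
    rw [hQ1] at ha
    split at ha
    · rcases Multiset.mem_cons.1 ha with h | h
      · subst h; omega
      · exact hP.1 a (Multiset.mem_of_mem_erase h)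
    · exact hP.1 a (Multiset.mem_of_mem_erase ha)
  · intro a ha; rw [hQ2] at ha; exact hP.2 a ha

lemma valid_leftMove {n : ℕ} {P Q : Pos} (hP : Valid n P) (h : LeftMove n P Q) :
    Valid n Q := by
  obtain ⟨x, hx, y, hy, hQ1, hQ2⟩ := h
  have hx1 := hP.1 x hx
  have hy1 := hP.2 y hy
  constructor
  · intro a ha; rw [hQ1] at ha; exact hP.1 a ha
  · intro a ha
    rw [hQ2] at ha
    split at ha
    · rcases Multiset.mem_cons.1 ha with h | h
      · subst h; omega
      · exact hP.2 a (Multiset.mem_of_mem_erase h)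
    · exact hP.2 a (Multiset.mem_of_mem_erase ha)

lemma phi_rightMove {n : ℕ} {P Q : Pos} (hP : Valid n P) (h : RightMove n P Q) :
    phi n Q < phi n P := by
  obtain ⟨x, hx, y, hy, hQ2, hQ1⟩ := h
  have hx1 := hP.1 x hx
  have hy1 := hP.2 y hy
  unfold phi
  rw [hQ1, hQ2]
  split
  · have := sum_cons_erase_lt (n := n) hx hx1.2 (show x < x + y by omega)
    omega
  · have := sum_erase_lt (n := n) hx hx1.2
    omega

lemma phi_leftMove {n : ℕ} {P Q : Pos} (hP : Valid n P) (h : LeftMove n P Q) :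
    phi n Q < phi n P := by
  obtain ⟨x, hx, y, hy, hQ1, hQ2⟩ := h
  have hx1 := hP.1 x hx
  have hy1 := hP.2 y hy
  unfold phi
  rw [hQ1, hQ2]
  split
  · have := sum_cons_erase_lt (n := n) hy hy1.2 (show y < x + y by omega)
    omega
  · have := sum_erase_lt (n := n) hy hy1.2
    omega

/-- The invariant maintained by Right (to move): Left's multiset is nonempty, and
either Left has strictly fewer hands, or equally many but some Left hand is
"doomed": it can be removed by any Right hand, now and forever. -/
def Good (n : ℕ) (P : Pos) : Prop :=
  P.1 ≠ 0 ∧ (P.1.card < P.2.card ∨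
    (P.1.card = P.2.card ∧ ∃ t ∈ P.1, ∀ y ∈ P.2, n < t + y))

lemma step {n N : ℕ}
    (IH : ∀ P : Pos, phi n P ≤ N → Valid n P → Good n P → RightWinsFirst n P)
    {P : Pos} (Q : Pos) (hphi : phi n P ≤ N + 1) (hP : Valid n P)
    (hmove : RightMove n P Q)
    (hgood : ∀ R, LeftMove n Q R → Good n R) : RightWinsFirst n P := by
  refine RightWinsFirst.intro P Q hmove (fun R hR => ?_)
  have hQv := valid_rightMove hP hmove
  have h1 := phi_rightMove hP hmove
  have h2 := phi_leftMove hQv hR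
  exact IH R (by omega) (valid_leftMove hQv hR) (hgood R hR)

lemma good_win {n : ℕ} : ∀ (N : ℕ) (P : Pos), phi n P ≤ N → Valid n P → Good n P →
    RightWinsFirst n P := by
  intro N
  induction N with
  | zero =>
    intro P hphi hP hG
    obtain ⟨x, hx⟩ := Multiset.exists_mem_of_ne_zero hG.1
    have hx1 := hP.1 x hx
    have hle : n + 1 - x ≤ (P.1.map (fun a => n + 1 - a)).sum :=
      Multiset.single_le_sum (by simp) _ (Multiset.mem_map_of_mem _ hx)
    unfold phi at hphi
    omega
  | succ N IH =>
    intro P hphi hP hG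
    obtain ⟨hX0, hdisj⟩ := hG
    have hXc : 0 < P.1.card := Multiset.card_pos.2 hX0
    have hYc : 0 < P.2.card := by rcases hdisj with h | ⟨h, _⟩ <;> omega
    have hY0 : P.2 ≠ 0 := by
      intro h; rw [h] at hYc; simp at hYc
    rcases hdisj with hlt | ⟨heq, t, ht, hdoom⟩
    · -- Left has strictly fewer hands.
      by_cases hrem : ∃ x ∈ P.1, ∃ y ∈ P.2, n < x + y
      · -- Right can remove a Left hand: do so.
        obtain ⟨x, hx, y, hy, hn⟩ := hrem
        refine step IH (P.1.erase x, P.2) hphi hP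
          ⟨x, hx, y, hy, rfl, by rw [if_neg (by omega)]⟩ ?_
        rintro R ⟨c, hc, y', hy', hR1, hR2⟩
        simp only at hc hy' hR1 hR2
        have hcR1 : R.1.card = P.1.card - 1 := by
          rw [hR1, Multiset.card_erase_of_mem hx, Nat.pred_eq_sub_one]
        have hcR2 : P.2.card - 1 ≤ R.2.card := by
          rw [hR2]; split
          · rw [Multiset.card_cons, Multiset.card_erase_of_mem hy', Nat.pred_eq_sub_one]; omega
          · rw [Multiset.card_erase_of_mem hy', Nat.pred_eq_sub_one]
        refine ⟨fun h0 => ?_, Or.inl (by omega)⟩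
        · rw [hR1] at h0; rw [h0] at hc; simp at hc
      · -- no removals available at all
        push_neg at hrem
        by_cases hc1 : P.1.card + 1 < P.2.card
        · -- big slack: any move keeps the invariant
          obtain ⟨x, hx⟩ := Multiset.exists_mem_of_ne_zero hX0
          obtain ⟨y, hy⟩ := Multiset.exists_mem_of_ne_zero hY0
          refine step IH ((x + y) ::ₘ P.1.erase x, P.2) hphi hP
            ⟨x, hx, y, hy, rfl, by rw [if_pos (hrem x hx y hy)]⟩ ?_
          rintro R ⟨c, hc, y', hy', hR1, hR2⟩
          simp only at hc hy' hR1 hR2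
          have hcR1 : R.1.card = P.1.card := by
            rw [hR1, Multiset.card_cons, Multiset.card_erase_of_mem hx, Nat.pred_eq_sub_one]; omega
          have hcR2 : P.2.card - 1 ≤ R.2.card := by
            rw [hR2]; split
            · rw [Multiset.card_cons, Multiset.card_erase_of_mem hy', Nat.pred_eq_sub_one]; omega
            · rw [Multiset.card_erase_of_mem hy', Nat.pred_eq_sub_one]
          refine ⟨fun h0 => ?_, Or.inl (by omega)⟩
          · rw [hR1] at h0; rw [h0] at hc; simp at hc
        · -- exactly one fewer hand
          have hc2 : P.1.card + 1 = P.2.card := by omega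
          have hYF : P.2.toFinset.Nonempty := by rwa [Multiset.toFinset_nonempty]
          have hXF : P.1.toFinset.Nonempty := by rwa [Multiset.toFinset_nonempty]
          set b := P.2.toFinset.max' hYF with hbdef
          set m := P.2.toFinset.min' hYF with hmdef
          set a := P.1.toFinset.max' hXF with hadef
          have hb : b ∈ P.2 := Multiset.mem_toFinset.1 (Finset.max'_mem _ _)
          have hm : m ∈ P.2 := Multiset.mem_toFinset.1 (Finset.min'_mem _ _)
          have ha : a ∈ P.1 := Multiset.mem_toFinset.1 (Finset.max'_mem _ _)
          have hble : ∀ y ∈ P.2, y ≤ b := fun y hy =>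
            Finset.le_max' _ _ (Multiset.mem_toFinset.2 hy)
          have hmle : ∀ y ∈ P.2, m ≤ y := fun y hy =>
            Finset.min'_le _ _ (Multiset.mem_toFinset.2 hy)
          have hale : ∀ x ∈ P.1, x ≤ a := fun x hx =>
            Finset.le_max' _ _ (Multiset.mem_toFinset.2 hx)
          by_cases hth : n < a + b + m
          · -- create a doomed hand a + b
            refine step IH ((a + b) ::ₘ P.1.erase a, P.2) hphi hP
              ⟨a, ha, b, hb, rfl, by rw [if_pos (hrem a ha b hb)]⟩ ?_
            rintro R ⟨c, hc, y', hy', hR1, hR2⟩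
            simp only at hc hy' hR1 hR2
            have hcR1 : R.1.card = P.1.card := by
              rw [hR1, Multiset.card_cons, Multiset.card_erase_of_mem ha, Nat.pred_eq_sub_one]; omega
            refine ⟨fun h0 => ?_, ?_⟩
            · rw [hR1] at h0; rw [h0] at hc; simp at hc
            · rw [hR2]; split
              · refine Or.inl ?_
                rw [Multiset.card_cons, Multiset.card_erase_of_mem hy', Nat.pred_eq_sub_one]; omega
              · refine Or.inr ⟨?_, a + b, ?_, ?_⟩
                · rw [Multiset.card_erase_of_mem hy', Nat.pred_eq_sub_one]; omega
                · rw [hR1]; exact Multiset.mem_cons_self _ _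
                · intro z hz
                  have hz2 : z ∈ P.2 := Multiset.mem_of_mem_erase hz
                  have := hmle z hz2
                  omega
          · -- play small: Left cannot remove afterwards
            refine step IH ((a + m) ::ₘ P.1.erase a, P.2) hphi hP
              ⟨a, ha, m, hm, rfl, by rw [if_pos (hrem a ha m hm)]⟩ ?_
            rintro R ⟨c, hc, y', hy', hR1, hR2⟩
            simp only at hc hy' hR1 hR2
            have hcR1 : R.1.card = P.1.card := by
              rw [hR1, Multiset.card_cons, Multiset.card_erase_of_mem ha, Nat.pred_eq_sub_one]; omega
            have hcle : c + y' ≤ n := by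
              rcases Multiset.mem_cons.1 hc with h | h
              · have := hble y' hy'
                omega
              · exact hrem c (Multiset.mem_of_mem_erase h) y' hy'
            have hcR2 : R.2.card = P.2.card := by
              rw [hR2, if_pos hcle, Multiset.card_cons,
                Multiset.card_erase_of_mem hy', Nat.pred_eq_sub_one]
              omega
            refine ⟨fun h0 => ?_, Or.inl (by omega)⟩
            · rw [hR1] at h0; rw [h0] at hc; simp at hc
    · -- equal counts with a doomed hand t
      by_cases hrem : ∃ x ∈ P.1.erase t, ∃ y ∈ P.2, n < x + y
      · -- remove a removable hand other than (one copy of) t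
        obtain ⟨x, hx, y, hy, hn⟩ := hrem
        have hxP : x ∈ P.1 := Multiset.mem_of_mem_erase hx
        have htx : t ∈ P.1.erase x := by
          by_cases hcase : t = x
          · subst hcase; exact hx
          · exact (Multiset.mem_erase_of_ne hcase).2 ht
        refine step IH (P.1.erase x, P.2) hphi hP
          ⟨x, hxP, y, hy, rfl, by rw [if_neg (by omega)]⟩ ?_
        rintro R ⟨c, hc, y', hy', hR1, hR2⟩
        simp only at hc hy' hR1 hR2
        have hcR1 : R.1.card = P.1.card - 1 := by
          rw [hR1, Multiset.card_erase_of_mem hxP, Nat.pred_eq_sub_one]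
        refine ⟨fun h0 => ?_, ?_⟩
        · rw [hR1] at h0; rw [h0] at hc; simp at hc
        · rw [hR2]; split
          · refine Or.inl ?_
            rw [Multiset.card_cons, Multiset.card_erase_of_mem hy', Nat.pred_eq_sub_one]; omega
          · refine Or.inr ⟨?_, t, ?_, ?_⟩
            · rw [Multiset.card_erase_of_mem hy', Nat.pred_eq_sub_one]; omega
            · rw [hR1]; exact htx
            · intro z hz
              exact hdoom z (Multiset.mem_of_mem_erase hz)
      · -- remove t itself; afterwards Left cannot remove anything
        push_neg at hrem
        obtain ⟨y, hy⟩ := Multiset.exists_mem_of_ne_zero hY0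
        refine step IH (P.1.erase t, P.2) hphi hP
          ⟨t, ht, y, hy, rfl, by rw [if_neg (by have := hdoom y hy; omega)]⟩ ?_
        rintro R ⟨c, hc, y', hy', hR1, hR2⟩
        simp only at hc hy' hR1 hR2
        have hcR1 : R.1.card = P.1.card - 1 := by
          rw [hR1, Multiset.card_erase_of_mem ht, Nat.pred_eq_sub_one]
        have hcle : c + y' ≤ n := hrem c hc y' hy'
        have hcR2 : R.2.card = P.2.card := by
          rw [hR2, if_pos hcle, Multiset.card_cons, Multiset.card_erase_of_mem hy', Nat.pred_eq_sub_one]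
          omega
        refine ⟨fun h0 => ?_, Or.inl (by omega)⟩
        · rw [hR1] at h0; rw [h0] at hc; simp at hc

lemma leftFirst_not_rightSecond {n : ℕ} {P : Pos} (h : LeftWinsFirst n P) :
    ¬ RightWinsSecond n P := by
  induction h with
  | intro P Q hmove hwin ih =>
    intro hR
    obtain ⟨_, Q₂, hm, hw⟩ := hR Q hmove
    exact ih Q₂ hm hw

lemma rightFirst_not_leftSecond {n : ℕ} {P : Pos} (h : RightWinsFirst n P) :
    ¬ LeftWinsSecond n P := by
  obtain ⟨_, Q, hm, hw⟩ := h
  intro hL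
  exact leftFirst_not_rightSecond (hL Q hm) hw

/-- if Left has fewer hands than Right and wins moving first,
then every winning first move of Left removes a hand from Right's list. -/
theorem lessHands_winning_moves (n : ℕ) (hn : 0 < n) (P : Pos) (hP : Valid n P)
    (hlr : Multiset.card P.1 < Multiset.card P.2)
    (hwin : LeftWinsFirst n P)
    (Q : Pos) (hQ : LeftMove n P Q) (hQwin : LeftWinsSecond n Q) :
    (∃ x ∈ P.1, ∃ y ∈ P.2, n < x + y ∧ Q = (P.1, P.2.erase y)) ∧
    Multiset.card Q.2 + 1 = Multiset.card P.2 := by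
  obtain ⟨x, hx, y, hy, hQ1, hQ2⟩ := hQ
  have hyc : 0 < P.2.card := Multiset.card_pos.2 (by intro h0; rw [h0] at hy; simp at hy)
  by_cases hxy : x + y ≤ n
  · -- a non-removing winning move is impossible
    exfalso
    rw [if_pos hxy] at hQ2
    have hQv : Valid n Q := valid_leftMove hP ⟨x, hx, y, hy, hQ1, by rw [hQ2, if_pos hxy]⟩
    have hQg : Good n Q := by
      refine ⟨by rw [hQ1]; intro h0; rw [h0] at hx; simp at hx, Or.inl ?_⟩
      rw [hQ1, hQ2, Multiset.card_cons, Multiset.card_erase_of_mem hy, Nat.pred_eq_sub_one]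
      omega
    exact rightFirst_not_leftSecond (good_win (phi n Q) Q le_rfl hQv hQg) hQwin
  · rw [if_neg hxy] at hQ2
    constructor
    · exact ⟨x, hx, y, hy, by omega, Prod.ext hQ1 hQ2⟩
    · rw [hQ2, Multiset.card_erase_of_mem hy, Nat.pred_eq_sub_one]; omega

end Octopus
end

section
/- Let a, b, c, d be nonnegative integers with a + b = c + d > 0. The Octopus position [1^a, 2^b | 1^c, 2^d] with finger count 2 is: a P-position if b = d = 0 and a and c are odd; an L-position if b = 0, d ≠ 0 and c is odd; an R-position if d = 0, b ≠ 0 and a is odd; and an N-position in all other cases. -/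
namespace Octopus

/-! ### Auxiliary machinery -/

/-- The multiset `{1^a, 2^b}`. -/
def X (a b : ℕ) : Multiset ℕ := Multiset.replicate a 1 + Multiset.replicate b 2

lemma memX {x a b : ℕ} (h : x ∈ X a b) : (x = 1 ∧ 1 ≤ a) ∨ (x = 2 ∧ 1 ≤ b) := by
  rcases Multiset.mem_add.mp h with h | h <;>
    rw [Multiset.mem_replicate] at h
  · exact Or.inl ⟨h.2, by omega⟩
  · exact Or.inr ⟨h.2, by omega⟩

lemma oneMemX {a : ℕ} (b : ℕ) (h : 1 ≤ a) : (1 : ℕ) ∈ X a b :=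
  Multiset.mem_add.mpr (Or.inl (Multiset.mem_replicate.mpr ⟨by omega, rfl⟩))

lemma twoMemX (a : ℕ) {b : ℕ} (h : 1 ≤ b) : (2 : ℕ) ∈ X a b :=
  Multiset.mem_add.mpr (Or.inr (Multiset.mem_replicate.mpr ⟨by omega, rfl⟩))

lemma erase1 {a : ℕ} (b : ℕ) (h : 1 ≤ a) : (X a b).erase 1 = X (a - 1) b := by
  obtain ⟨a', rfl⟩ : ∃ a', a = a' + 1 := ⟨a - 1, by omega⟩
  simp only [X, Multiset.replicate_succ, Multiset.cons_add, Multiset.erase_cons_head,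
    Nat.add_sub_cancel]

lemma erase2 (a : ℕ) {b : ℕ} (h : 1 ≤ b) : (X a b).erase 2 = X a (b - 1) := by
  obtain ⟨b', rfl⟩ : ∃ b', b = b' + 1 := ⟨b - 1, by omega⟩
  simp only [X, Multiset.replicate_succ, Multiset.add_cons, Multiset.erase_cons_head,
    Nat.add_sub_cancel]

lemma cons2 (a b : ℕ) : (2 : ℕ) ::ₘ X a b = X a (b + 1) := by
  simp only [X, Multiset.replicate_succ, Multiset.add_cons]

lemma two_def (a b c d : ℕ) : two a b c d = (X a b, X c d) := rfl

/-! ### Left's moves from `two a b c d` with finger count 2 -/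

lemma move_conv {a c : ℕ} (b d : ℕ) (ha : 1 ≤ a) (hc : 1 ≤ c) :
    LeftMove 2 (two a b c d) (two a b (c - 1) (d + 1)) := by
  refine ⟨1, oneMemX b ha, 1, oneMemX d hc, rfl, ?_⟩
  show X (c - 1) (d + 1) =
    if (1 + 1 : ℕ) ≤ 2 then ((1 + 1 : ℕ)) ::ₘ (X c d).erase 1 else (X c d).erase 1
  rw [if_pos (by norm_num), erase1 d hc, cons2]

lemma move_kill2a {a d : ℕ} (b c : ℕ) (ha : 1 ≤ a) (hd : 1 ≤ d) :
    LeftMove 2 (two a b c d) (two a b c (d - 1)) := by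
  refine ⟨1, oneMemX b ha, 2, twoMemX c hd, rfl, ?_⟩
  show X c (d - 1) =
    if (1 + 2 : ℕ) ≤ 2 then ((1 + 2 : ℕ)) ::ₘ (X c d).erase 2 else (X c d).erase 2
  rw [if_neg (by norm_num), erase2 c hd]

lemma move_kill1b {b c : ℕ} (a d : ℕ) (hb : 1 ≤ b) (hc : 1 ≤ c) :
    LeftMove 2 (two a b c d) (two a b (c - 1) d) := by
  refine ⟨2, twoMemX a hb, 1, oneMemX d hc, rfl, ?_⟩
  show X (c - 1) d =
    if (2 + 1 : ℕ) ≤ 2 then ((2 + 1 : ℕ)) ::ₘ (X c d).erase 1 else (X c d).erase 1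
  rw [if_neg (by norm_num), erase1 d hc]

lemma move_kill2b {b d : ℕ} (a c : ℕ) (hb : 1 ≤ b) (hd : 1 ≤ d) :
    LeftMove 2 (two a b c d) (two a b c (d - 1)) := by
  refine ⟨2, twoMemX a hb, 2, twoMemX c hd, rfl, ?_⟩
  show X c (d - 1) =
    if (2 + 2 : ℕ) ≤ 2 then ((2 + 2 : ℕ)) ::ₘ (X c d).erase 2 else (X c d).erase 2
  rw [if_neg (by norm_num), erase2 c hd]

/-! ### Classification of Right's moves -/

lemma rightMove_cases {a b c d : ℕ} {R : Pos} (h : RightMove 2 (two a b c d) R) :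
    (1 ≤ a ∧ 1 ≤ c ∧ R = two (a - 1) (b + 1) c d) ∨
    (1 ≤ a ∧ 1 ≤ d ∧ R = two (a - 1) b c d) ∨
    (1 ≤ b ∧ 1 ≤ c + d ∧ R = two a (b - 1) c d) := by
  obtain ⟨x, hx, y, hy, h2, h1⟩ := h
  simp only [two_def] at hx hy h1 h2
  rcases memX hx with ⟨rfl, ha⟩ | ⟨rfl, hb⟩ <;> rcases memX hy with ⟨rfl, hc⟩ | ⟨rfl, hd⟩
  · left
    refine ⟨ha, hc, ?_⟩
    rw [if_pos (by norm_num), erase1 b ha] at h1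
    rw [cons2 (a - 1) b] at h1
    exact Prod.ext h1 h2
  · right; left
    refine ⟨ha, hd, ?_⟩
    rw [if_neg (by norm_num), erase1 b ha] at h1
    exact Prod.ext h1 h2
  · right; right
    refine ⟨hb, by omega, ?_⟩
    rw [if_neg (by norm_num), erase2 a hb] at h1
    exact Prod.ext h1 h2
  · right; right
    refine ⟨hb, by omega, ?_⟩
    rw [if_neg (by norm_num), erase2 a hb] at h1
    exact Prod.ext h1 h2

/-! ### Swapping the players -/

lemma rightMove_of_leftMove {n : ℕ} {P Q : Pos} (h : LeftMove n P Q) :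
    RightMove n (P.2, P.1) (Q.2, Q.1) := by
  obtain ⟨x, hx, y, hy, h1, h2⟩ := h
  exact ⟨y, hy, x, hx, h1, by rw [Nat.add_comm y x]; exact h2⟩

lemma leftMove_of_rightMove {n : ℕ} {P Q : Pos} (h : RightMove n P Q) :
    LeftMove n (P.2, P.1) (Q.2, Q.1) := by
  obtain ⟨x, hx, y, hy, h2, h1⟩ := h
  exact ⟨y, hy, x, hx, h2, by rw [Nat.add_comm y x]; exact h1⟩

lemma swapLR {n : ℕ} {P : Pos} (h : LeftWinsFirst n P) : RightWinsFirst n (P.2, P.1) := by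
  induction h with
  | intro P Q hmove hwin ih =>
    refine RightWinsFirst.intro _ (Q.2, Q.1) (rightMove_of_leftMove hmove) ?_
    intro S hS
    have hS' : RightMove n Q (S.2, S.1) := by
      obtain ⟨x, hx, y, hy, h1, h2⟩ := hS
      exact ⟨y, hy, x, hx, h1, by rw [Nat.add_comm y x]; exact h2⟩
    exact ih _ hS'

lemma unswap {Q : Pos} {M N : Multiset ℕ} (h : (Q.2, Q.1) = (M, N)) : Q = (N, M) :=
  Prod.ext (congrArg Prod.snd h) (congrArg Prod.fst h)

lemma leftMove_cases {a b c d : ℕ} {Q : Pos} (h : LeftMove 2 (two a b c d) Q) :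
    (1 ≤ a ∧ 1 ≤ c ∧ Q = two a b (c - 1) (d + 1)) ∨
    (1 ≤ b ∧ 1 ≤ c ∧ Q = two a b (c - 1) d) ∨
    (1 ≤ a + b ∧ 1 ≤ d ∧ Q = two a b c (d - 1)) := by
  have h' : RightMove 2 (two c d a b) (Q.2, Q.1) := rightMove_of_leftMove h
  rcases rightMove_cases h' with ⟨hc, ha, hQ⟩ | ⟨hc, hb, hQ⟩ | ⟨hd, hab, hQ⟩
  · exact Or.inl ⟨ha, hc, unswap hQ⟩
  · exact Or.inr (Or.inl ⟨hb, hc, unswap hQ⟩)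
  · exact Or.inr (Or.inr ⟨hab, hd, unswap hQ⟩)

/-! ### The winning predicate for Left moving first -/

/-- Characterization of positions `two a b c d` from which Left, moving first, wins
(finger count 2). -/
def pL (a b c d : ℕ) : Prop :=
  0 < a + b ∧ 0 < c + d ∧
    (c + d < a + b ∨ (a + b = c + d ∧ ¬(d = 0 ∧ a % 2 = 1)) ∨
      (a + b + 1 = c + d ∧ b = 0 ∧ c % 2 = 1 ∧ 1 ≤ d))

lemma main : ∀ N a b c d : ℕ, 2 * a + b + 2 * c + d ≤ N → pL a b c d →
    LeftWinsFirst 2 (two a b c d) := by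
  intro N
  induction N with
  | zero =>
    intro a b c d hm hp
    exfalso; unfold pL at hp; omega
  | succ N IH =>
    intro a b c d hm hp
    have safe : ∀ a' b' c' d' : ℕ, 2 * a' + b' + 2 * c' + d' ≤ N →
        ((1 ≤ a' ∧ 1 ≤ c') → pL (a' - 1) (b' + 1) c' d') →
        ((1 ≤ a' ∧ 1 ≤ d') → pL (a' - 1) b' c' d') →
        ((1 ≤ b' ∧ 1 ≤ c' + d') → pL a' (b' - 1) c' d') →
        ∀ R, RightMove 2 (two a' b' c' d') R → LeftWinsFirst 2 R := by
      intro a' b' c' d' hN h1 h2 h3 R hR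
      rcases rightMove_cases hR with ⟨ha, hc, rfl⟩ | ⟨ha, hd, rfl⟩ | ⟨hb, hcd, rfl⟩
      · exact IH _ _ _ _ (by omega) (h1 ⟨ha, hc⟩)
      · exact IH _ _ _ _ (by omega) (h2 ⟨ha, hd⟩)
      · exact IH _ _ _ _ (by omega) (h3 ⟨hb, hcd⟩)
    have hp' := hp
    unfold pL at hp'
    by_cases hQC : 1 ≤ c ∧ 1 ≤ b ∧
        (c + d < a + b ∨ (a + b = c + d ∧ (d = 0 ∨ a % 2 = 1)))
    · refine LeftWinsFirst.intro _ _ (move_kill1b a d hQC.2.1 hQC.1)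
        (safe a b (c - 1) d (by omega) ?_ ?_ ?_) <;>
        · intro hh; unfold pL; omega
    · by_cases hQV : b = 0 ∧ d = 0
      · refine LeftWinsFirst.intro _ _ (move_conv b d (by omega) (by omega))
          (safe a b (c - 1) (d + 1) (by omega) ?_ ?_ ?_) <;>
          · intro hh; unfold pL; omega
      · have hd : 1 ≤ d := by omega
        by_cases ha : 1 ≤ a
        · refine LeftWinsFirst.intro _ _ (move_kill2a b c ha hd)
            (safe a b c (d - 1) (by omega) ?_ ?_ ?_) <;>
            · intro hh; unfold pL; omega
        · refine LeftWinsFirst.intro _ _ (move_kill2b a c (by omega) hd)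
            (safe a b c (d - 1) (by omega) ?_ ?_ ?_) <;>
            · intro hh; unfold pL; omega

lemma LWF_of_pL {a b c d : ℕ} (h : pL a b c d) : LeftWinsFirst 2 (two a b c d) :=
  main _ a b c d le_rfl h

lemma RWF_of_pL {a b c d : ℕ} (h : pL c d a b) : RightWinsFirst 2 (two a b c d) :=
  swapLR (LWF_of_pL h)


/-- outcomes of `[1^a, 2^b | 1^c, 2^d]` with finger count 2 when
both players have the same (positive) number of hands. -/
theorem fingerTwo_sameNumberOfHands (a b c d : ℕ)
    (h : a + b = c + d) (h0 : 0 < a + b) :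
    ((b = 0 ∧ d = 0 ∧ Odd a ∧ Odd c) → PPos 2 (two a b c d)) ∧
    ((b = 0 ∧ d ≠ 0 ∧ Odd c) → LPos 2 (two a b c d)) ∧
    ((d = 0 ∧ b ≠ 0 ∧ Odd a) → RPos 2 (two a b c d)) ∧
    ((¬ (b = 0 ∧ d = 0 ∧ Odd a ∧ Odd c) ∧ ¬ (b = 0 ∧ d ≠ 0 ∧ Odd c) ∧
      ¬ (d = 0 ∧ b ≠ 0 ∧ Odd a)) → NPos 2 (two a b c d)) := by

  rw [Nat.odd_iff, Nat.odd_iff]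
  refine ⟨?_, ?_, ?_, ?_⟩
  · rintro ⟨rfl, rfl, ha, hc⟩
    constructor
    · intro Q hQ
      rcases rightMove_cases hQ with ⟨ha', hc', rfl⟩ | ⟨_, hd', _⟩ | ⟨hb', _, _⟩
      · exact LWF_of_pL (by unfold pL; omega)
      · omega
      · omega
    · intro Q hQ
      rcases leftMove_cases hQ with ⟨ha', hc', rfl⟩ | ⟨hb', _, _⟩ | ⟨_, hd', _⟩
      · exact RWF_of_pL (by unfold pL; omega)
      · omega
      · omega
  · rintro ⟨rfl, hd, hc⟩
    constructor
    · exact LWF_of_pL (by unfold pL; omega)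
    · intro Q hQ
      rcases rightMove_cases hQ with ⟨ha', hc', rfl⟩ | ⟨ha', hd', rfl⟩ | ⟨hb', _, _⟩
      · exact LWF_of_pL (by unfold pL; omega)
      · exact LWF_of_pL (by unfold pL; omega)
      · omega
  · rintro ⟨rfl, hb, ha⟩
    constructor
    · exact RWF_of_pL (by unfold pL; omega)
    · intro Q hQ
      rcases leftMove_cases hQ with ⟨ha', hc', rfl⟩ | ⟨hb', hc', rfl⟩ | ⟨_, hd', _⟩
      · exact RWF_of_pL (by unfold pL; omega)
      · exact RWF_of_pL (by unfold pL; omega)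
      · omega
  · rintro ⟨h1, h2, h3⟩
    exact ⟨LWF_of_pL (by unfold pL; omega), RWF_of_pL (by unfold pL; omega)⟩

end Octopus
end

section
/- Let c and d be nonnegative integers with d ≥ 1 and c even, and let a = c + d. Then the Octopus position [1^a | 1^c, 2^d] with finger count 2 is an N-position: whichever player moves first has a winning strategy. -/
namespace Octopus

/-- The winning-for-first-mover (Left) predicate, as a Presburger formula. -/
def F (a b c d : ℕ) : Prop :=
  1 ≤ a + b ∧ 1 ≤ c + d ∧
  (1 ≤ b → 1 ≤ d → c + d ≤ a + b) ∧
  (1 ≤ b → d = 0 → c + a % 2 ≤ a + b) ∧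
  (b = 0 → 1 ≤ d → c + d ≤ a + c % 2) ∧
  (b = 0 → d = 0 → c + c % 2 ≤ a)

lemma mem_rep {x a b : ℕ} :
    x ∈ Multiset.replicate a 1 + Multiset.replicate b 2 ↔
      (a ≠ 0 ∧ x = 1) ∨ (b ≠ 0 ∧ x = 2) := by
  simp [Multiset.mem_replicate]

lemma erase1_s14 (c d : ℕ) :
    (Multiset.replicate (c + 1) 1 + Multiset.replicate d 2).erase 1 =
      Multiset.replicate c 1 + Multiset.replicate d 2 := by
  rw [Multiset.replicate_succ, Multiset.cons_add, Multiset.erase_cons_head]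

lemma erase2_s14 (c d : ℕ) :
    (Multiset.replicate c 1 + Multiset.replicate (d + 1) 2).erase 2 =
      Multiset.replicate c 1 + Multiset.replicate d 2 := by
  rw [Multiset.replicate_succ, Multiset.add_cons, Multiset.erase_cons_head]

lemma cons2_s14 (c d : ℕ) :
    (2 : ℕ) ::ₘ (Multiset.replicate c 1 + Multiset.replicate d 2) =
      Multiset.replicate c 1 + Multiset.replicate (d + 1) 2 := by
  rw [Multiset.replicate_succ, Multiset.add_cons]

lemma lm_conv {a : ℕ} (b c d : ℕ) (ha : 1 ≤ a) :
    LeftMove 2 (two a b (c + 1) d) (two a b c (d + 1)) := by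
  refine ⟨1, ?_, 1, ?_, rfl, ?_⟩
  · exact mem_rep.mpr (Or.inl ⟨by omega, rfl⟩)
  · exact mem_rep.mpr (Or.inl ⟨by omega, rfl⟩)
  · show _ = if 1 + 1 ≤ 2 then _ else _
    rw [if_pos (by norm_num)]
    rw [show (two a b (c + 1) d).2 = Multiset.replicate (c + 1) 1 + Multiset.replicate d 2
      from rfl, erase1_s14, show (1 + 1 : ℕ) = 2 from rfl, cons2_s14]
    rfl

lemma lm_kill1 {b : ℕ} (a c d : ℕ) (hb : 1 ≤ b) :
    LeftMove 2 (two a b (c + 1) d) (two a b c d) := by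
  refine ⟨2, ?_, 1, ?_, rfl, ?_⟩
  · exact mem_rep.mpr (Or.inr ⟨by omega, rfl⟩)
  · exact mem_rep.mpr (Or.inl ⟨by omega, rfl⟩)
  · show _ = if 2 + 1 ≤ 2 then _ else _
    rw [if_neg (by norm_num)]
    exact (erase1_s14 c d).symm

lemma lm_kill2 {a b : ℕ} (c d : ℕ) (hab : 1 ≤ a + b) :
    LeftMove 2 (two a b c (d + 1)) (two a b c d) := by
  rcases Nat.lt_or_ge 0 a with ha | ha
  · refine ⟨1, ?_, 2, ?_, rfl, ?_⟩
    · exact mem_rep.mpr (Or.inl ⟨by omega, rfl⟩)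
    · exact mem_rep.mpr (Or.inr ⟨by omega, rfl⟩)
    · show _ = if 1 + 2 ≤ 2 then _ else _
      rw [if_neg (by norm_num)]
      exact (erase2_s14 c d).symm
  · refine ⟨2, ?_, 2, ?_, rfl, ?_⟩
    · exact mem_rep.mpr (Or.inr ⟨by omega, rfl⟩)
    · exact mem_rep.mpr (Or.inr ⟨by omega, rfl⟩)
    · show _ = if 2 + 2 ≤ 2 then _ else _
      rw [if_neg (by norm_num)]
      exact (erase2_s14 c d).symm

lemma lm_inv {a b c d : ℕ} {Q : Pos} (h : LeftMove 2 (two a b c d) Q) :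
    (1 ≤ a ∧ 1 ≤ c ∧ Q = two a b (c - 1) (d + 1)) ∨
    (1 ≤ a + b ∧ 1 ≤ d ∧ Q = two a b c (d - 1)) ∨
    (1 ≤ b ∧ 1 ≤ c ∧ Q = two a b (c - 1) d) := by
  obtain ⟨x, hx, y, hy, h1, h2⟩ := h
  have hQ : Q = (Q.1, Q.2) := rfl
  rw [show (two a b c d).1 = Multiset.replicate a 1 + Multiset.replicate b 2 from rfl,
    mem_rep] at hx
  rw [show (two a b c d).2 = Multiset.replicate c 1 + Multiset.replicate d 2 from rfl,
    mem_rep] at hy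
  rcases hx with ⟨ha, rfl⟩ | ⟨hb, rfl⟩ <;> rcases hy with ⟨hc, rfl⟩ | ⟨hd, rfl⟩
  · -- x = 1, y = 1 : conversion
    obtain ⟨c', rfl⟩ : ∃ c', c = c' + 1 := ⟨c - 1, by omega⟩
    left
    refine ⟨by omega, by omega, ?_⟩
    rw [hQ, h1]
    refine congrArg _ ?_
    rw [h2, if_pos (by norm_num)]
    show (1 + 1) ::ₘ _ = _
    rw [show (1 + 1 : ℕ) = 2 from rfl,
      show (two a b (c' + 1) d).2 = Multiset.replicate (c' + 1) 1 + Multiset.replicate d 2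
        from rfl, erase1_s14, cons2_s14]
    rfl
  · -- x = 1, y = 2 : remove a two
    obtain ⟨d', rfl⟩ : ∃ d', d = d' + 1 := ⟨d - 1, by omega⟩
    right; left
    refine ⟨by omega, by omega, ?_⟩
    rw [hQ, h1]
    refine congrArg _ ?_
    rw [h2, if_neg (by norm_num)]
    show (Multiset.replicate c 1 + Multiset.replicate (d' + 1) 2).erase 2 = _
    rw [erase2_s14]
    rfl
  · -- x = 2, y = 1 : remove a one
    obtain ⟨c', rfl⟩ : ∃ c', c = c' + 1 := ⟨c - 1, by omega⟩
    right; right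
    refine ⟨by omega, by omega, ?_⟩
    rw [hQ, h1]
    refine congrArg _ ?_
    rw [h2, if_neg (by norm_num)]
    show (Multiset.replicate (c' + 1) 1 + Multiset.replicate d 2).erase 1 = _
    rw [erase1_s14]
    rfl
  · -- x = 2, y = 2 : remove a two
    obtain ⟨d', rfl⟩ : ∃ d', d = d' + 1 := ⟨d - 1, by omega⟩
    right; left
    refine ⟨by omega, by omega, ?_⟩
    rw [hQ, h1]
    refine congrArg _ ?_
    rw [h2, if_neg (by norm_num)]
    show (Multiset.replicate c 1 + Multiset.replicate (d' + 1) 2).erase 2 = _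
    rw [erase2_s14]
    rfl

lemma rightMove_swap_s14 {n : ℕ} {P Q : Pos} :
    RightMove n P Q ↔ LeftMove n (P.2, P.1) (Q.2, Q.1) := by
  constructor <;> rintro ⟨x, hx, y, hy, h1, h2⟩ <;>
    · refine ⟨y, hy, x, hx, h1, ?_⟩
      rw [Nat.add_comm y x]
      exact h2

lemma rm_inv {a b c d : ℕ} {Q : Pos} (h : RightMove 2 (two a b c d) Q) :
    (1 ≤ a ∧ 1 ≤ c ∧ Q = two (a - 1) (b + 1) c d) ∨
    (1 ≤ c + d ∧ 1 ≤ b ∧ Q = two a (b - 1) c d) ∨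
    (1 ≤ d ∧ 1 ≤ a ∧ Q = two (a - 1) b c d) := by
  rw [rightMove_swap_s14] at h
  have h' : LeftMove 2 (two c d a b) (Q.2, Q.1) := h
  have hQ : Q = (Q.1, Q.2) := rfl
  rcases lm_inv h' with ⟨h1, h2, h3⟩ | ⟨h1, h2, h3⟩ | ⟨h1, h2, h3⟩ <;>
    simp only [two, Prod.mk.injEq] at h3
  · left; exact ⟨h2, h1, by rw [hQ, h3.2, h3.1]; rfl⟩
  · right; left; exact ⟨h1, h2, by rw [hQ, h3.2, h3.1]; rfl⟩
  · right; right; exact ⟨h1, h2, by rw [hQ, h3.2, h3.1]; rfl⟩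

lemma rwf_of_lwf {n : ℕ} : ∀ {P : Pos}, LeftWinsFirst n P → RightWinsFirst n (P.2, P.1) := by
  intro P h
  induction h with
  | intro P Q hmove hwin ih =>
    refine RightWinsFirst.intro _ (Q.2, Q.1) (rightMove_swap_s14.mpr hmove) ?_
    intro R hR
    have hR' : RightMove n Q (R.2, R.1) := rightMove_swap_s14.mpr hR
    exact ih _ hR'

lemma leftWins : ∀ (N a b c d : ℕ), 2 * a + b + 2 * c + d ≤ N → F a b c d →
    LeftWinsFirst 2 (two a b c d) := by
  intro N
  induction N with
  | zero =>
    intro a b c d hm hF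
    exact absurd hF (by simp only [F]; omega)
  | succ N ih =>
    intro a b c d hm hF
    simp only [F] at hF
    by_cases hbc : 1 ≤ b ∧ 1 ≤ c
    · obtain ⟨c', rfl⟩ : ∃ c', c = c' + 1 := ⟨c - 1, by omega⟩
      refine LeftWinsFirst.intro _ (two a b c' d) (lm_kill1 a c' d hbc.1) ?_
      intro R hR
      rcases rm_inv hR with ⟨h1, h2, rfl⟩ | ⟨h1, h2, rfl⟩ | ⟨h1, h2, rfl⟩ <;>
        exact ih _ _ _ _ (by omega) (by simp only [F]; omega)
    · by_cases hd : 1 ≤ d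
      · obtain ⟨d', rfl⟩ : ∃ d', d = d' + 1 := ⟨d - 1, by omega⟩
        refine LeftWinsFirst.intro _ (two a b c d') (lm_kill2 c d' (by omega)) ?_
        intro R hR
        rcases rm_inv hR with ⟨h1, h2, rfl⟩ | ⟨h1, h2, rfl⟩ | ⟨h1, h2, rfl⟩ <;>
          exact ih _ _ _ _ (by omega) (by simp only [F]; omega)
      · obtain ⟨c', rfl⟩ : ∃ c', c = c' + 1 := ⟨c - 1, by omega⟩
        have hd0 : d = 0 := by omega
        subst hd0
        refine LeftWinsFirst.intro _ (two a b c' 1) (lm_conv b c' 0 (by omega)) ?_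
        intro R hR
        rcases rm_inv hR with ⟨h1, h2, rfl⟩ | ⟨h1, h2, rfl⟩ | ⟨h1, h2, rfl⟩ <;>
          exact ih _ _ _ _ (by omega) (by simp only [F]; omega)

/-- for `d ≥ 1`, `c` even and `a = c + d`, the position
`[1^a | 1^c, 2^d]` with finger count 2 is an N-position. -/
theorem fingerTwo_N_case_even (c d : ℕ) (hd : 1 ≤ d) (hc : Even c) :
    NPos 2 (two (c + d) 0 c d) := by
  have hc2 : c % 2 = 0 := Nat.even_iff.mp hc
  constructor
  · exact leftWins (2 * (c + d) + 0 + 2 * c + d) (c + d) 0 c d le_rfl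
      (by simp only [F]; omega)
  · have h : LeftWinsFirst 2 (two c d (c + d) 0) :=
      leftWins (2 * c + d + 2 * (c + d) + 0) c d (c + d) 0 le_rfl
        (by simp only [F]; omega)
    exact rwf_of_lwf h

end Octopus
end
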